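/- arXiv:1012.5410 — 3 statements merged into one kernel-verified Lean document; each statement's English description precedes it below -/
import Mathlib

section
/- Let 0 < a < 1 and let (s_n) be a sequence of real numbers satisfying s_n = a·|s_{n-1} - s_{n-2}| for all n ≥ 2. Then lim_{n→∞} s_n = 0. -/
theorem stmt_0 (a : ℝ) (ha0 : 0 < a) (ha1 : a < 1) (s : ℕ → ℝ)
    (hs : ∀ n, 2 ≤ n → s n = a * |s (n - 1) - s (n - 2)|) :
    Filter.Tendsto s Filter.atTop (nhds 0) := by
  have hnn : ∀ n, 2 ≤ n → 0 ≤ s n := fun n hn => by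
    rw [hs n hn]; positivity
  set M : ℝ := max (s 2) (s 3) with hM
  have hM0 : 0 ≤ M := le_trans (hnn 2 le_rfl) (le_max_left _ _)
  -- key bound: s n ≤ a^((n-2)/2) * M for n ≥ 2
  have key : ∀ n, 2 ≤ n → s n ≤ a ^ ((n - 2) / 2) * M := by
    intro n
    induction n using Nat.strong_induction_on with
    | _ n ih =>
      intro hn
      match n, hn with
      | 2, _ =>
          rw [show (2 - 2) / 2 = 0 from rfl, pow_zero, one_mul]
          exact le_max_left (s 2) (s 3)
      | 3, _ =>
          rw [show (3 - 2) / 2 = 0 from rfl, pow_zero, one_mul]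
          exact le_max_right (s 2) (s 3)
      | (m + 4), _ =>
        have h1 : s (m + 3) ≤ a ^ ((m + 1) / 2) * M := by
          simpa using ih (m + 3) (by omega) (by omega)
        have h2 : s (m + 2) ≤ a ^ (m / 2) * M := by
          simpa using ih (m + 2) (by omega) (by omega)
        have habs : |s (m + 3) - s (m + 2)| ≤ a ^ (m / 2) * M := by
          have h3 : 0 ≤ s (m + 3) := hnn _ (by omega)
          have h4 : 0 ≤ s (m + 2) := hnn _ (by omega)
          have hle : a ^ ((m + 1) / 2) ≤ a ^ (m / 2) :=
            pow_le_pow_of_le_one ha0.le ha1.le (by omega)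
          rw [abs_sub_le_iff]
          constructor <;> nlinarith [mul_le_mul_of_nonneg_right hle hM0]
        have heq : s (m + 4) = a * |s (m + 3) - s (m + 2)| := by
          have := hs (m + 4) (by omega)
          simpa using this
        rw [heq]
        have : a * |s (m + 3) - s (m + 2)| ≤ a * (a ^ (m / 2) * M) :=
          mul_le_mul_of_nonneg_left habs ha0.le
        refine this.trans (le_of_eq ?_)
        have : (m + 4 - 2) / 2 = m / 2 + 1 := by omega
        rw [this, pow_succ]; ring
  -- a^((n-2)/2) * M → 0
  have hdiv : Filter.Tendsto (fun n : ℕ => (n - 2) / 2) Filter.atTop Filter.atTop := by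
    apply Filter.tendsto_atTop_atTop.2
    intro b
    exact ⟨2 * b + 2, fun n hn => by omega⟩
  have hpow : Filter.Tendsto (fun n : ℕ => a ^ ((n - 2) / 2) * M) Filter.atTop (nhds 0) := by
    have := (tendsto_pow_atTop_nhds_zero_of_lt_one ha0.le ha1).comp hdiv
    simpa using this.mul_const M
  refine tendsto_of_tendsto_of_tendsto_of_le_of_le' tendsto_const_nhds hpow ?_ ?_
  · filter_upwards [Filter.eventually_ge_atTop 2] with n hn using hnn n hn
  · filter_upwards [Filter.eventually_ge_atTop 2] with n hn using key n hn
end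

section
/- Let S be a nonempty set, k > m ≥ 1, and suppose the factorization hypotheses f_n = φ_n ∘ H_n and g_n = ψ_n ∘ H_n hold as in the form-symmetry definition. If (t_n, y_n) is a pair of sequences in S such that φ_n(t_n,…,t_{n-m}) = ψ_n(t_n,…,t_{n-m}) and h_n(y_n, y_{n-1}, …, y_{n-k+m}) = t_n for all n ≥ 1 (including the matching conditions h_j(y_j,…,y_{j-k+m}) = t_j for j = 0, -1, …, -m+1), then (y_n) satisfies f_n(y_n,…,y_{n-k}) = g_n(y_n,…,y_{n-k}) for all n ≥ 1. -/
theorem stmt_17 (S : Type*) [Nonempty S] (k m : ℕ) (hm : 1 ≤ m) (hmk : m < k)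
    (f g : ℤ → (Fin (k + 1) → S) → S)
    (φ ψ : ℤ → (Fin (m + 1) → S) → S)
    (h : ℤ → (Fin (k - m + 1) → S) → S)
    (hf : ∀ n u, f n u = φ n (fun i =>
      h (n - (i : ℕ)) (fun l => u ⟨(i : ℕ) + (l : ℕ), by omega⟩)))
    (hg : ∀ n u, g n u = ψ n (fun i =>
      h (n - (i : ℕ)) (fun l => u ⟨(i : ℕ) + (l : ℕ), by omega⟩)))
    (t y : ℤ → S)
    (hfac : ∀ n : ℤ, 1 ≤ n →
      φ n (fun i => t (n - (i : ℕ))) = ψ n (fun i => t (n - (i : ℕ))))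
    (hcof : ∀ n : ℤ, 1 - (m : ℤ) ≤ n → h n (fun l => y (n - (l : ℕ))) = t n) :
    ∀ n : ℤ, 1 ≤ n →
      f n (fun j => y (n - (j : ℕ))) = g n (fun j => y (n - (j : ℕ))) := by
  intro n hn
  rw [hf, hg]
  have key : (fun i : Fin (m + 1) =>
      h (n - (i : ℕ)) (fun l => (fun j : Fin (k + 1) => y (n - (j : ℕ)))
        ⟨(i : ℕ) + (l : ℕ), by omega⟩)) = fun i : Fin (m + 1) => t (n - (i : ℕ)) := by
    funext i
    have := hcof (n - (i : ℕ)) (by have := i.isLt; omega)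
    rw [← this]
    congr 1
    funext l
    simp only []
    push_cast
    ring_nf
  rw [key]
  exact hfac n hn
end

section
/- Let G be a group and suppose h_n(u,v) = μ_n(u) * θ_n(v) with θ_n bijections, and define ζ_{j,n} as in the semi-invertible criterion. Suppose E_n: G^{k+1} → G is such that E_n(u₀, ζ_{1,n}(u₀,v₁), …, ζ_{k,n}(u₀,v₁,…,v_k)) is independent of u₀ for all n and all v₁,…,v_k ∈ G; define φ_n(v₁,…,v_k) to be this common value. Then for all u₀,…,u_k ∈ G, φ_n(h_n(u₀,u₁), h_{n-1}(u₁,u₂), …, h_{n-k+1}(u_{k-1},u_k)) = E_n(u₀,u₁,…,u_k). -/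
/-- The recursively defined quantities `ζ_{j,n}` of the semi-invertible map criterion:
`ζ_{0,n} = u₀` and `ζ_{j,n} = θ_{n-j+1}⁻¹((μ_{n-j+1}(ζ_{j-1,n}))⁻¹ * v_j)`. -/
def zeta {G : Type*} [Group G] (μ : ℤ → G → G) (θ : ℤ → G ≃ G)
    (n : ℤ) (u0 : G) (v : ℕ → G) : ℕ → G
  | 0 => u0
  | j + 1 => (θ (n - (j : ℕ))).symm ((μ (n - (j : ℕ)) (zeta μ θ n u0 v j))⁻¹ * v (j + 1))

lemma zeta_eq {G : Type*} [Group G] (μ : ℤ → G → G) (θ : ℤ → G ≃ G) (n : ℤ) (u : ℕ → G) :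
    ∀ j, zeta μ θ n (u 0)
      (fun i => μ (n - (i : ℕ) + 1) (u (i - 1)) * θ (n - (i : ℕ) + 1) (u i)) j = u j := by
  intro j
  induction j with
  | zero => rfl
  | succ j ih =>
    simp only [zeta, ih]
    push_cast
    rw [show n - ((j : ℤ) + 1) + 1 = n - j by ring]
    simp

theorem stmt_19 (G : Type*) [Group G] (k : ℕ) (μ : ℤ → G → G) (θ : ℤ → G ≃ G)
    (E : ℤ → (Fin (k + 1) → G) → G)
    (hind : ∀ (n : ℤ) (v : ℕ → G) (u0 u0' : G),
      E n (fun j => zeta μ θ n u0 v (j : ℕ)) = E n (fun j => zeta μ θ n u0' v (j : ℕ)))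
    (φ : ℤ → (ℕ → G) → G)
    (hφ : ∀ (n : ℤ) (v : ℕ → G) (u0 : G),
      φ n v = E n (fun j => zeta μ θ n u0 v (j : ℕ))) :
    ∀ (n : ℤ) (u : ℕ → G),
      φ n (fun i => μ (n - (i : ℕ) + 1) (u (i - 1)) * θ (n - (i : ℕ) + 1) (u i)) =
        E n (fun j => u (j : ℕ)) := by
  intro n u
  rw [hφ n _ (u 0)]
  congr 1
  funext j
  exact zeta_eq μ θ n u (j : ℕ)
end
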